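/- There exists a real number u4 with 1 < u4 < 3/2, and a corresponding u1 = 2u4(7 - 2u4)/(7u4 + 7) > 0, such that, with u2 = u3 = 1 and E1 = -3/u1 - u1 - u1/(2u4^2), E2 = 7u1/2 - 9 + u4, E4 = 7u1/(2u4^2) - 9/u4 + (2 - u4^2)/u4, we have E1 = E2 = E4, with u1 and u4 distinct from each other and from 1. -/

import Mathlib

theorem exists_nonnaturally_reductive_solution :
    ∃ u1 u4 : ℝ, 0 < u1 ∧ 1 < u4 ∧ u4 < 3 / 2 ∧ u4 ≠ 1 ∧
      u1 = 2 * u4 * (7 - 2 * u4) / (7 * u4 + 7) ∧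
      u1 ≠ 1 ∧ u1 ≠ u4 ∧
      (-3 / u1 - u1 - u1 / (2 * u4 ^ 2) = 7 * u1 / 2 - 9 + u4) ∧
      (7 * u1 / 2 - 9 + u4
        = 7 * u1 / (2 * u4 ^ 2) - 9 / u4 + (2 - u4 ^ 2) / u4) := by
  have hQcont : Continuous fun x : ℝ =>
      44 * x ^ 4 - 182 * x ^ 3 + 505 * x ^ 2 - 644 * x + 245 := by continuity
  have hIVT := intermediate_value_Icc (a := (13/10 : ℝ)) (b := (7/5 : ℝ))
    (by norm_num) hQcont.continuousOn
  have hmem : (0 : ℝ) ∈ Set.Icc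
      (44 * (13/10:ℝ) ^ 4 - 182 * (13/10) ^ 3 + 505 * (13/10) ^ 2 - 644 * (13/10) + 245)
      (44 * (7/5:ℝ) ^ 4 - 182 * (7/5) ^ 3 + 505 * (7/5) ^ 2 - 644 * (7/5) + 245) := by
    constructor <;> norm_num
  obtain ⟨x, hx, hQ⟩ := hIVT hmem
  obtain ⟨hx1, hx2⟩ := hx
  have hx0 : (0:ℝ) < x := by linarith
  have hxgt : (1:ℝ) < x := by linarith
  have hxlt : x < 3/2 := by linarith
  have hd : 7 * x + 7 ≠ 0 := by positivity
  have hxne : x ≠ 0 := ne_of_gt hx0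
  set u1 : ℝ := 2 * x * (7 - 2 * x) / (7 * x + 7) with hu1def
  have hu1pos : 0 < u1 := by
    apply div_pos
    · nlinarith
    · linarith
  have hu1ne : u1 ≠ 0 := ne_of_gt hu1pos
  have hu1mul : u1 * (7 * x + 7) = 2 * x * (7 - 2 * x) := by
    rw [hu1def]; field_simp
  refine ⟨u1, x, hu1pos, hxgt, hxlt, by linarith, hu1def, ?_, ?_, ?_, ?_⟩
  · intro h
    rw [h] at hu1mul
    nlinarith
  · intro h
    rw [h] at hu1mul
    nlinarith
  · have hnum : 2 * x * (7 - 2 * x) ≠ 0 := by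
      have : (0:ℝ) < 2 * x * (7 - 2 * x) := by nlinarith
      exact ne_of_gt this
    have h72 : 7 - 2 * x ≠ 0 := by intro h; linarith
    rw [hu1def]
    field_simp
    linear_combination (-1) * hQ
  · rw [hu1def]
    field_simp
    ring
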